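/- arXiv:2503.23792 — 4 statements merged into one kernel-verified Lean document; each statement's English description precedes it below -/
import Mathlib

section
/- (Swan's independence result.) In the two-period durable goods model, suppose service demand Q_{jt} depends only on the vector of current service prices {P_{kt}} (not on consumer inventories, durability levels themselves, or other-period service prices). Then the firm's profit-maximizing durability choice φ_j solves min_{φ} [c_{j1}(φ) - β·c_{j2}·φ], i.e., the durability choice minimizes the cost of providing a unit of service in period 1 and is independent of both the demand functions and prices. -/
/-! Once the service demands do not react to durability, the profit is a strictly decreasing
affine function of the per-unit cost `c₁ φ - β c₂ φ` of period-1 service (the slope is `-Q₁ < 0`),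
so maximizing profit over durability is the same as minimizing that cost. -/

theorem IsMinOn.of_isMaxOn_comp_strictAnti {α β γ : Type*} [LinearOrder β] [Preorder γ]
    {f : α → β} {g : β → γ} {s : Set α} {a : α} (hg : StrictAnti g)
    (h : IsMaxOn (g ∘ f) s a) : IsMinOn f s a :=
  fun _ hx => hg.le_iff_ge.mp (h hx)

theorem stmt_5_general (c₁ : ℝ → ℝ) (c₂ β Q₁ Q₂ P₁ P₂ : ℝ)
    (hQ₁ : 0 < Q₁)
    (V : ℝ → ℝ)
    (hV : ∀ φ, V φ = (P₁ - c₁ φ + β * c₂ * φ) * Q₁ + β * (P₂ - c₂) * Q₂)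
    (φstar : ℝ)
    (hmax : IsMaxOn V (Set.Icc (0 : ℝ) 1) φstar) :
    IsMinOn (fun φ => c₁ φ - β * c₂ * φ) (Set.Icc (0 : ℝ) 1) φstar := by
  set profitOfCost : ℝ → ℝ := fun k => (P₁ - k) * Q₁ + β * (P₂ - c₂) * Q₂
  have hV_comp : V = profitOfCost ∘ fun φ => c₁ φ - β * c₂ * φ := by
    funext φ
    simp only [hV, profitOfCost, Function.comp_apply]
    ring
  have h_anti : StrictAnti profitOfCost := fun x y hxy => by
    simp only [profitOfCost]
    nlinarith
  exact IsMinOn.of_isMaxOn_comp_strictAnti h_anti (hV_comp ▸ hmax)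

/-- Swan's independence result: when service demand does not depend on
inventories, durability or other-period service prices, the
profit-maximizing durability minimizes the cost of providing a unit of
period-1 service. -/
theorem stmt_5 (c₁ : ℝ → ℝ) (c₂ β Q₁ Q₂ P₁ P₂ : ℝ)
    (hQ₁ : 0 < Q₁) (hβ : 0 < β)
    (V : ℝ → ℝ)
    (hV : ∀ φ, V φ = (P₁ - c₁ φ + β * c₂ * φ) * Q₁ + β * (P₂ - c₂) * Q₂)
    (φstar : ℝ) (hmem : φstar ∈ Set.Icc (0 : ℝ) 1)
    (hmax : IsMaxOn V (Set.Icc (0 : ℝ) 1) φstar) :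
    IsMinOn (fun φ => c₁ φ - β * c₂ * φ) (Set.Icc (0 : ℝ) 1) φstar :=
  stmt_5_general c₁ c₂ β Q₁ Q₂ P₁ P₂ hQ₁ V hV φstar hmax
end

section
/- (Proposition on collusion and durability.) In the two-period model, suppose demand decreases in competitors' durability (∂q_{k}/∂φ_j ≤ 0 for k ≠ j and ∂q_j/∂φ_j ≥ 0), product prices are fixed at the no-collusion levels, the cross-inventory effect satisfies ∑_{k} (∂q_{k,1}/∂φ_1)·φ_k·(∂q_{2,2}/∂Ψ_{k,2}) ≤ 0, and the joint profit V₁ + V₂ is strictly concave in φ₁. If φᴼ is firm 1's individually optimal durability (satisfying ∂V₁/∂φ₁ = 0) and φᶜᴰ is the jointly optimal durability (satisfying ∂(V₁+V₂)/∂φ₁ = 0), then φᶜᴰ ≤ φᴼ: collusion on durability weakly lowers product durability. -/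
/-!
Firm 2's profit depends on `φ₁` only through its period-1 demand and its period-2 demand, both weakly
decreasing in `φ₁`, with nonnegative markups; so `∂V₂/∂φ₁ ≤ 0`. At firm 1's optimum `φᴼ` the joint
marginal profit is therefore `∂V₂/∂φ₁ ≤ 0`, and since the joint marginal profit is strictly decreasing
and vanishes at `φᶜᴰ`, we get `φᶜᴰ ≤ φᴼ`.
-/

theorem le_of_deriv_eq_zero_of_deriv_nonpos {f : ℝ → ℝ} (hconc : ∀ x, deriv (deriv f) x < 0)
    {a b : ℝ} (ha : deriv f a = 0) (hb : deriv f b ≤ 0) : a ≤ b :=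
  (strictAnti_of_deriv_neg hconc).le_iff_ge.mp (ha ▸ hb)

theorem deriv_mul_add_mul_nonpos {g h : ℝ → ℝ} {a b x : ℝ} (ha : 0 ≤ a) (hb : 0 ≤ b)
    (hg : DifferentiableAt ℝ g x) (hh : DifferentiableAt ℝ h x)
    (hg' : deriv g x ≤ 0) (hh' : deriv h x ≤ 0) :
    deriv (fun y => a * g y + b * h y) x ≤ 0 := by
  rw [deriv_fun_add (hg.const_mul a) (hh.const_mul b), deriv_const_mul a hg, deriv_const_mul b hh]
  exact add_nonpos (mul_nonpos_of_nonneg_of_nonpos ha hg') (mul_nonpos_of_nonneg_of_nonpos hb hh')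

/-- `q₁ q₂` are the period-1 demands for products 1 and 2 as functions of firm 1's durability `φ₁`
(prices fixed at no-collusion levels), `Q₂` is firm 2's period-2 demand (depending on `φ₁` through
inventories `Ψ_k = φ_k·q_k`), `dΨ k` is `∂q_{2,2}/∂Ψ_{k,2}`, `φ₂` is firm 2's durability and
`m₂₁ m₂₂` are firm 2's markups. -/
theorem stmt_6_general (V₁ q₁ q₂ Q₂ : ℝ → ℝ) (dΨ : Fin 2 → ℝ)
    (m₂₁ m₂₂ β φ₂ : ℝ)
    (hβ : 0 < β ∧ β ≤ 1) (hm₂₁ : 0 ≤ m₂₁) (hm₂₂ : 0 ≤ m₂₂)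
    (hV₁ : Differentiable ℝ V₁)
    (hq₂ : Differentiable ℝ q₂) (hQ₂ : Differentiable ℝ Q₂)
    -- competitor's period-1 demand weakly decreases in firm 1's durability
    (hcomp : ∀ φ, deriv q₂ φ ≤ 0)
    -- chain rule for the period-2 demand through inventories
    (hchain : ∀ φ, deriv Q₂ φ = deriv q₁ φ * φ * dΨ 0 + deriv q₂ φ * φ₂ * dΨ 1)
    -- the cross-inventory effect is nonpositive
    (hcross : ∀ φ, deriv q₁ φ * φ * dΨ 0 + deriv q₂ φ * φ₂ * dΨ 1 ≤ 0)
    (V₂ : ℝ → ℝ)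
    (hV₂ : ∀ φ, V₂ φ = m₂₁ * q₂ φ + β * m₂₂ * Q₂ φ)
    -- strict concavity of the joint profit in φ₁
    (hconc : ∀ φ, deriv (deriv (fun x => V₁ x + V₂ x)) φ < 0)
    (φO φCD : ℝ)
    (hO : deriv V₁ φO = 0)
    (hCD : deriv (fun x => V₁ x + V₂ x) φCD = 0) :
    φCD ≤ φO := by
  obtain rfl : V₂ = fun φ => m₂₁ * q₂ φ + β * m₂₂ * Q₂ φ := funext hV₂
  have hV₂_diff : DifferentiableAt ℝ (fun φ => m₂₁ * q₂ φ + β * m₂₂ * Q₂ φ) φO :=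
    ((hq₂ φO).const_mul _).add ((hQ₂ φO).const_mul _)
  have hV₂_anti : deriv (fun φ => m₂₁ * q₂ φ + β * m₂₂ * Q₂ φ) φO ≤ 0 :=
    deriv_mul_add_mul_nonpos hm₂₁ (mul_nonneg hβ.1.le hm₂₂) (hq₂ φO) (hQ₂ φO) (hcomp φO)
      ((hchain φO).trans_le (hcross φO))
  refine le_of_deriv_eq_zero_of_deriv_nonpos hconc hCD ?_
  rwa [deriv_fun_add (hV₁ φO) hV₂_diff, hO, zero_add]

/-- Collusion on durability weakly lowers durability.  `q₁ q₂` are period-1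
demands for products 1 and 2 as functions of firm 1's durability `φ₁`
(prices fixed at no-collusion levels), `Q₂` is firm 2's period-2 demand
(depending on `φ₁` through inventories `Ψ_k = φ_k·q_k`), `dΨ k` is
`∂q_{2,2}/∂Ψ_{k,2}` and `φ₂` is firm 2's durability. -/
theorem stmt_6 (V₁ q₁ q₂ Q₂ : ℝ → ℝ) (dΨ : Fin 2 → ℝ)
    (m₂₁ m₂₂ β φ₂ : ℝ)
    (hβ : 0 < β ∧ β ≤ 1) (hm₂₁ : 0 ≤ m₂₁) (hm₂₂ : 0 ≤ m₂₂)
    (hV₁ : Differentiable ℝ V₁) (hq₁ : Differentiable ℝ q₁)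
    (hq₂ : Differentiable ℝ q₂) (hQ₂ : Differentiable ℝ Q₂)
    -- own demand weakly increases in own durability
    (hown : ∀ φ, 0 ≤ deriv q₁ φ)
    -- competitor's period-1 demand weakly decreases in firm 1's durability
    (hcomp : ∀ φ, deriv q₂ φ ≤ 0)
    -- chain rule for the period-2 demand through inventories
    (hchain : ∀ φ, deriv Q₂ φ = deriv q₁ φ * φ * dΨ 0 + deriv q₂ φ * φ₂ * dΨ 1)
    -- the cross-inventory effect is nonpositive
    (hcross : ∀ φ, deriv q₁ φ * φ * dΨ 0 + deriv q₂ φ * φ₂ * dΨ 1 ≤ 0)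
    (V₂ : ℝ → ℝ)
    (hV₂ : ∀ φ, V₂ φ = m₂₁ * q₂ φ + β * m₂₂ * Q₂ φ)
    -- strict concavity of the joint profit in φ₁
    (hJdiff : ∀ φ, DifferentiableAt ℝ (deriv (fun x => V₁ x + V₂ x)) φ)
    (hconc : ∀ φ, deriv (deriv (fun x => V₁ x + V₂ x)) φ < 0)
    (φO φCD : ℝ)
    (hO : deriv V₁ φO = 0)
    (hCD : deriv (fun x => V₁ x + V₂ x) φCD = 0) :
    φCD ≤ φO :=
  stmt_6_general V₁ q₁ q₂ Q₂ dΨ m₂₁ m₂₂ β φ₂ hβ hm₂₁ hm₂₂ hV₁ hq₂ hQ₂ hcomp hchain hcross V₂ hV₂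
    hconc φO φCD hO hCD
end

section
/- (Proposition on price levels and durability.) In the two-period model with exogenous service prices, under the assumptions that service demand is independent of durability per se and of other-period service prices, that ∂Q_{j,2}/∂Ψ_{j,2} ≥ 0, that ∂²Q_{j,2}/(∂P_{j,2}∂Ψ_{j,2}) ≥ 0, that P_{j,2} - c_{j,2} ≥ 0, and that the profit is strictly concave in φ_j at the optimum, the cross-partial of firm j's profit satisfies ∂²V_j/(∂φ_j ∂P_{j,2}) ≥ 0 at the optimal durability. Consequently (by the implicit function theorem) the optimal durability φ_j* is weakly increasing in the period-2 service price P_{j,2}. -/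
/-!
Differentiating `p ↦ β (p - c₂) Q₁ ∂Q₂/∂Ψ(p, φ Q₁)` by the product rule gives the cross-partial
`β Q₁ (∂Q₂/∂Ψ + (P - c₂) ∂²Q₂/∂P∂Ψ)`, a sum of nonnegative terms once the markup `P - c₂` is
nonnegative. Differentiating the first-order condition `Vφ (φ* P) P = 0` along `P` gives
`Vφφ · φ*' + ∂Vφ/∂P = 0`, so the second-order condition `Vφφ < 0` forces `φ*' ≥ 0` wherever the
cross-partial is nonnegative, and `φ*` is monotone on `P ≥ c₂`.
-/

theorem hasDerivAt_add_markup_mul {D : ℝ → ℝ} {D' K β c Q₁ P : ℝ} (hD : HasDerivAt D D' P) :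
    HasDerivAt (fun p => K + β * (p - c) * Q₁ * D p) (β * Q₁ * (D P + (P - c) * D')) P := by
  have hmarkup : HasDerivAt (fun p => β * (p - c) * Q₁) (β * Q₁) P := by
    simpa using (((hasDerivAt_id P).sub_const c).const_mul β).mul_const Q₁
  exact ((hmarkup.mul hD).const_add K).congr_deriv (by ring)

theorem hasDerivAt_comp_graph {F : ℝ → ℝ → ℝ} {g : ℝ → ℝ} {p a b g' : ℝ}
    (hF : DifferentiableAt ℝ (fun q : ℝ × ℝ => F q.1 q.2) (g p, p))
    (hx : HasDerivAt (fun x => F x p) a (g p)) (hy : HasDerivAt (F (g p)) b p)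
    (hg : HasDerivAt g g' p) :
    HasDerivAt (fun t => F (g t) t) (a * g' + b) p := by
  set L := fderiv ℝ (fun q : ℝ × ℝ => F q.1 q.2) (g p, p)
  have hL : HasFDerivAt (fun q : ℝ × ℝ => F q.1 q.2) L (g p, p) := hF.hasFDerivAt
  have hL₁ : L (1, 0) = a := by
    have h := hL.comp_hasDerivAt (g p) ((hasDerivAt_id (g p)).prodMk (hasDerivAt_const (g p) p))
    exact h.unique hx
  have hL₂ : L (0, 1) = b := by
    have h := hL.comp_hasDerivAt p ((hasDerivAt_const p (g p)).prodMk (hasDerivAt_id p))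
    exact h.unique hy
  have hsplit : ((g', 1) : ℝ × ℝ) = g' • ((1, 0) : ℝ × ℝ) + (0, 1) := by simp
  have hchain : HasDerivAt (fun t => F (g t) t) (L (g', 1)) p :=
    hL.comp_hasDerivAt_of_eq p (hg.prodMk (hasDerivAt_id p)) rfl
  rwa [hsplit, map_add, map_smul, hL₁, hL₂, smul_eq_mul, mul_comm] at hchain

theorem deriv_nonneg_of_implicit {F : ℝ → ℝ → ℝ} {g : ℝ → ℝ} {p a b : ℝ}
    (hzero : ∀ t, F (g t) t = 0)
    (hF : DifferentiableAt ℝ (fun q : ℝ × ℝ => F q.1 q.2) (g p, p))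
    (hx : HasDerivAt (fun x => F x p) a (g p)) (hy : HasDerivAt (F (g p)) b p)
    (hg : DifferentiableAt ℝ g p) (ha : a < 0) (hb : 0 ≤ b) :
    0 ≤ deriv g p := by
  have hconst : HasDerivAt (fun t => F (g t) t) (a * deriv g p + b) p :=
    hasDerivAt_comp_graph hF hx hy hg.hasDerivAt
  have hvanish : a * deriv g p + b = 0 := by
    simp only [hzero] at hconst
    exact hconst.unique (hasDerivAt_const p 0)
  exact nonneg_of_mul_nonpos_right (by linarith) ha

theorem stmt_7_general (c₁ : ℝ → ℝ) (β c₂ Q₁ : ℝ)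
    (hβ : 0 < β ∧ β ≤ 1) (hQ₁ : 0 < Q₁)
    (DΨ D2 : ℝ → ℝ → ℝ)
    (hD2 : ∀ P ψ, HasDerivAt (fun p => DΨ p ψ) (D2 P ψ) P)
    (hDΨ0 : ∀ P ψ, 0 ≤ DΨ P ψ)
    (hD20 : ∀ P ψ, 0 ≤ D2 P ψ)
    (Vφ Vφφ : ℝ → ℝ → ℝ)
    (hVφ : ∀ φ P, Vφ φ P =
      (-(deriv c₁ φ) + β * c₂) * Q₁ + β * (P - c₂) * Q₁ * DΨ P (φ * Q₁))
    (hC1 : ContDiff ℝ 1 (fun q : ℝ × ℝ => Vφ q.1 q.2))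
    (hVφφ : ∀ φ P, HasDerivAt (fun x => Vφ x P) (Vφφ φ P) φ)
    (φstar : ℝ → ℝ) (hφstar : Differentiable ℝ φstar)
    (hFOC : ∀ P, Vφ (φstar P) P = 0)
    (hSOC : ∀ P, Vφφ (φstar P) P < 0) :
    (∀ φ P, c₂ ≤ P →
        HasDerivAt (fun p => Vφ φ p)
          (β * Q₁ * (DΨ P (φ * Q₁) + (P - c₂) * D2 P (φ * Q₁))) P ∧
        0 ≤ β * Q₁ * (DΨ P (φ * Q₁) + (P - c₂) * D2 P (φ * Q₁))) ∧
      MonotoneOn φstar (Set.Ici c₂) := by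
  have hcross : ∀ φ P, HasDerivAt (Vφ φ)
      (β * Q₁ * (DΨ P (φ * Q₁) + (P - c₂) * D2 P (φ * Q₁))) P := fun φ P => by
    rw [show Vφ φ = _ from funext (hVφ φ)]
    exact hasDerivAt_add_markup_mul (hD2 P (φ * Q₁))
  have hcross_nonneg : ∀ φ P, c₂ ≤ P →
      0 ≤ β * Q₁ * (DΨ P (φ * Q₁) + (P - c₂) * D2 P (φ * Q₁)) := fun φ P hP =>
    mul_nonneg (mul_nonneg hβ.1.le hQ₁.le)
      (add_nonneg (hDΨ0 _ _) (mul_nonneg (sub_nonneg.mpr hP) (hD20 _ _)))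
  refine ⟨fun φ P hP => ⟨hcross φ P, hcross_nonneg φ P hP⟩, ?_⟩
  refine monotoneOn_of_deriv_nonneg (convex_Ici c₂) hφstar.continuous.continuousOn
    hφstar.differentiableOn fun P hP => ?_
  rw [interior_Ici] at hP
  exact deriv_nonneg_of_implicit hFOC (hC1.differentiable one_ne_zero _) (hVφφ _ P)
    (hcross _ P) (hφstar P) (hSOC P) (hcross_nonneg _ P (le_of_lt hP))

/-- Higher period-2 service prices raise optimal durability.  `Vφ φ P` is
`∂V_j/∂φ_j` at durability `φ` and period-2 service price `P`; `DΨ P ψ` is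
`∂Q_{j,2}/∂Ψ_{j,2}` and `D2 P ψ` is `∂²Q_{j,2}/(∂P_{j,2}∂Ψ_{j,2})`.  The
cross-partial `∂²V_j/(∂φ_j∂P_{j,2})` is nonnegative whenever the markup
`P - c₂` is, and consequently the optimal durability `φstar` (defined by the
first- and second-order conditions) is weakly increasing in `P_{j,2}`. -/
theorem stmt_7 (c₁ : ℝ → ℝ) (β c₂ Q₁ : ℝ)
    (hβ : 0 < β ∧ β ≤ 1) (hQ₁ : 0 < Q₁)
    (Q₂ DΨ D2 : ℝ → ℝ → ℝ)
    (hDΨ : ∀ P ψ, HasDerivAt (fun x => Q₂ P x) (DΨ P ψ) ψ)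
    (hD2 : ∀ P ψ, HasDerivAt (fun p => DΨ p ψ) (D2 P ψ) P)
    (hDΨ0 : ∀ P ψ, 0 ≤ DΨ P ψ)
    (hD20 : ∀ P ψ, 0 ≤ D2 P ψ)
    (Vφ Vφφ : ℝ → ℝ → ℝ)
    (hVφ : ∀ φ P, Vφ φ P =
      (-(deriv c₁ φ) + β * c₂) * Q₁ + β * (P - c₂) * Q₁ * DΨ P (φ * Q₁))
    (hC1 : ContDiff ℝ 1 (fun q : ℝ × ℝ => Vφ q.1 q.2))
    (hVφφ : ∀ φ P, HasDerivAt (fun x => Vφ x P) (Vφφ φ P) φ)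
    (φstar : ℝ → ℝ) (hφstar : Differentiable ℝ φstar)
    (hFOC : ∀ P, Vφ (φstar P) P = 0)
    (hSOC : ∀ P, Vφφ (φstar P) P < 0) :
    (∀ φ P, c₂ ≤ P →
        HasDerivAt (fun p => Vφ φ p)
          (β * Q₁ * (DΨ P (φ * Q₁) + (P - c₂) * D2 P (φ * Q₁))) P ∧
        0 ≤ β * Q₁ * (DΨ P (φ * Q₁) + (P - c₂) * D2 P (φ * Q₁))) ∧
      MonotoneOn φstar (Set.Ici c₂) :=
  stmt_7_general c₁ β c₂ Q₁ hβ hQ₁ DΨ D2 hD2 hDΨ0 hD20 Vφ Vφφ hVφ hC1 hVφφ φstar hφstar hFOC hSOC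
end

section
/- Under the rational-expectations transformation, if η_t satisfies β·e_{0,t} + η_t - β·η_{t+1} = 0 and one defines V̂_t = V_t + η_t and δ̂_{j,t} = δ_{j,t} - ∑_{τ≥1} f(μ_j,τ)·η_{t+τ} + e_{j,t} + η_t, then the conditional choice probabilities are invariant: exp(δ_{j,t} + κ_{j,t} + ∑_{τ≥1} f(μ_j,τ)·V_{t+τ} + e_{j,t}) / exp(V_t) = exp(δ̂_{j,t} + κ_{j,t} + ∑_{τ≥1} f(μ_j,τ)·V̂_{t+τ}) / exp(V̂_t), and V̂ satisfies the expectation-error-free Bellman equation V̂_t = log(exp(β·V̂_{t+1}) + ∑_j exp(δ̂_{j,t} + κ_{j,t} + ∑_{τ≥1} f(μ_j,τ)·V̂_{t+τ})). -/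
/-! Adding `η t` to every period-`t` choice-specific value and to `V t` leaves the softmax
choice probabilities unchanged and shifts the log-sum-exp by exactly `η t`. The recursion for `η`
is what makes the outside option `β V (t+1) + β e₀ t` move by `η t` as well, once rewritten in
terms of `V̂ = V + η`; for the inside options the `η`-terms entering through the discounted
continuation values are cancelled by the definition of `δ̂`. -/

namespace Real

theorem exp_add_div_exp_add (a b c : ℝ) : exp (a + c) / exp (b + c) = exp a / exp b := by
  rw [exp_add, exp_add, mul_div_mul_right _ _ (exp_ne_zero c)]

theorem log_exp_add_sum_exp_add {ι : Type*} (s : Finset ι) (x c : ℝ) (y : ι → ℝ) :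
    log (exp (x + c) + ∑ i ∈ s, exp (y i + c)) = log (exp x + ∑ i ∈ s, exp (y i)) + c := by
  have hpos : 0 < exp x + ∑ i ∈ s, exp (y i) :=
    add_pos_of_pos_of_nonneg (exp_pos x) (Finset.sum_nonneg fun i _ => (exp_pos (y i)).le)
  simp only [exp_add, ← Finset.sum_mul, ← add_mul]
  rw [log_mul hpos.ne' (exp_ne_zero c), log_exp]

end Real

theorem stmt_16_general {J : Type*} [Fintype J]
    (β : ℝ)
    (f : J → ℕ → ℝ)
    (V η e0 : ℕ → ℝ) (δ κ e : J → ℕ → ℝ)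
    (hsumV : ∀ j t, Summable (fun τ : ℕ => f j τ * V (t + τ)))
    (hsumη : ∀ j t, Summable (fun τ : ℕ => f j τ * η (t + τ)))
    (hBell : ∀ t, V t = Real.log (Real.exp (β * V (t + 1) + β * e0 t) +
      ∑ j, Real.exp (δ j t + κ j t + (∑' τ : ℕ, f j τ * V (t + τ)) + e j t)))
    (hη : ∀ t, β * e0 t + η t - β * η (t + 1) = 0)
    (Vhat : ℕ → ℝ) (hVhat : ∀ t, Vhat t = V t + η t)
    (δhat : J → ℕ → ℝ)
    (hδhat : ∀ j t,
      δhat j t = δ j t - (∑' τ : ℕ, f j τ * η (t + τ)) + e j t + η t) :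
    (∀ t (j : J),
      Real.exp (δ j t + κ j t + (∑' τ : ℕ, f j τ * V (t + τ)) + e j t) /
          Real.exp (V t) =
        Real.exp (δhat j t + κ j t + (∑' τ : ℕ, f j τ * Vhat (t + τ))) /
          Real.exp (Vhat t)) ∧
    (∀ t, Vhat t = Real.log (Real.exp (β * Vhat (t + 1)) +
      ∑ j, Real.exp (δhat j t + κ j t + ∑' τ : ℕ, f j τ * Vhat (t + τ)))) := by
  have hinside : ∀ j t, δhat j t + κ j t + ∑' τ : ℕ, f j τ * Vhat (t + τ) =
      (δ j t + κ j t + (∑' τ : ℕ, f j τ * V (t + τ)) + e j t) + η t := by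
    intro j t
    have hsplit : ∑' τ : ℕ, f j τ * Vhat (t + τ) =
        (∑' τ : ℕ, f j τ * V (t + τ)) + ∑' τ : ℕ, f j τ * η (t + τ) := by
      simp only [hVhat, mul_add]
      exact (hsumV j t).tsum_add (hsumη j t)
    rw [hsplit, hδhat]
    ring
  have houtside : ∀ t, β * Vhat (t + 1) = (β * V (t + 1) + β * e0 t) + η t := by
    intro t
    rw [hVhat]
    linarith [hη t]
  refine ⟨fun t j => ?_, fun t => ?_⟩
  · rw [hinside, hVhat, Real.exp_add_div_exp_add]
  · simp only [hinside, houtside]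
    rw [Real.log_exp_add_sum_exp_add, ← hBell, hVhat]

/-- Rational-expectations transformation: redefining value functions and mean
utilities by the `η`-adjustment leaves conditional choice probabilities
invariant, and the adjusted value function satisfies the
expectation-error-free Bellman equation. -/
theorem stmt_16 {J : Type*} [Fintype J]
    (β α : ℝ) (hβ : 0 < β ∧ β < 1)
    (f : J → ℕ → ℝ) (hf0 : ∀ j, f j 0 = 0) (hf1 : ∀ j, HasSum (f j) 1)
    (V η e0 : ℕ → ℝ) (δ κ e pr : J → ℕ → ℝ)
    (hκ : ∀ j t, κ j t = -α * pr j t)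
    (hsumV : ∀ j t, Summable (fun τ : ℕ => f j τ * V (t + τ)))
    (hsumη : ∀ j t, Summable (fun τ : ℕ => f j τ * η (t + τ)))
    (hBell : ∀ t, V t = Real.log (Real.exp (β * V (t + 1) + β * e0 t) +
      ∑ j, Real.exp (δ j t + κ j t + (∑' τ : ℕ, f j τ * V (t + τ)) + e j t)))
    (hη : ∀ t, β * e0 t + η t - β * η (t + 1) = 0)
    (Vhat : ℕ → ℝ) (hVhat : ∀ t, Vhat t = V t + η t)
    (δhat : J → ℕ → ℝ)
    (hδhat : ∀ j t,
      δhat j t = δ j t - (∑' τ : ℕ, f j τ * η (t + τ)) + e j t + η t) :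
    (∀ t (j : J),
      Real.exp (δ j t + κ j t + (∑' τ : ℕ, f j τ * V (t + τ)) + e j t) /
          Real.exp (V t) =
        Real.exp (δhat j t + κ j t + (∑' τ : ℕ, f j τ * Vhat (t + τ))) /
          Real.exp (Vhat t)) ∧
    (∀ t, Vhat t = Real.log (Real.exp (β * Vhat (t + 1)) +
      ∑ j, Real.exp (δhat j t + κ j t + ∑' τ : ℕ, f j τ * Vhat (t + τ)))) :=
  stmt_16_general β f V η e0 δ κ e hsumV hsumη hBell hη Vhat hVhat δhat hδhat
end
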